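/- Let s be a rational number and let r > 0 be a real number with r^2 rational. Then r · J_{s+1}(r) / J_s(r) is irrational. -/

import Mathlib

/-- The Bessel function of the first kind of order `ν`, for `r > 0`:
`J_ν(r) = ∑_{k=0}^∞ ((-1)^k / (k! Γ(ν+k+1))) (r/2)^(ν+2k)`. -/
noncomputable def besselJ (ν r : ℝ) : ℝ :=
  ∑' k : ℕ, ((-1 : ℝ) ^ k / (k.factorial * Real.Gamma (ν + k + 1))) *
    (r / 2) ^ (ν + 2 * (k : ℝ))

/-!
If the ratio were rational, or `J_s(r) = 0`, the pair `(J_s(r), r J_{s+1}(r))` would be a real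
multiple `c • (a₀, a₁)` of a rational vector. The recurrence
`J_{ν-1} + J_{ν+1} = (2ν/r) J_ν` then gives `rⁿ J_{s+n}(r) = c aₙ` with rationals `aₙ`
satisfying a three-term recurrence with rational coefficients (this is where `r² ∈ ℚ` enters),
so that `E Dⁿ aₙ ∈ ℤ` for fixed `D, E`. As `J_{s+n}(r) ~ (r/2)^{s+n} / Γ(s+n+1)` is eventually
positive, `aₙ ≠ 0` and `|c| ≤ E (D r)ⁿ J_{s+n}(r) → 0`, so `c = 0`.
-/

open Real Filter Topology

noncomputable def besselJTerm (ν r : ℝ) (k : ℕ) : ℝ :=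
  (-1) ^ k / (k.factorial * Gamma (ν + k + 1)) * (r / 2) ^ (ν + 2 * (k : ℝ))

lemma besselJ_eq_tsum (ν r : ℝ) : besselJ ν r = ∑' k, besselJTerm ν r k := rfl

-- Also valid at the poles, where `Real.Gamma` takes the value `0`.
lemma inv_Gamma_eq_self_mul_inv_Gamma_add_one (x : ℝ) :
    (Gamma x)⁻¹ = x * (Gamma (x + 1))⁻¹ := by
  rcases eq_or_ne x 0 with rfl | hx
  · simp [Gamma_zero]
  · rw [Gamma_add_one hx, mul_inv, ← mul_assoc, mul_inv_cancel₀ hx, one_mul]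

lemma besselJTerm_zero (ν r : ℝ) : besselJTerm ν r 0 = (r / 2) ^ ν / Gamma (ν + 1) := by
  simp [besselJTerm, div_eq_inv_mul]

lemma besselJTerm_succ {ν r : ℝ} (hr : 0 < r) {k : ℕ} (hk : ν + k + 1 ≠ 0) :
    besselJTerm ν r (k + 1) =
      -((r / 2) ^ 2 / ((k + 1) * (ν + k + 1))) * besselJTerm ν r k := by
  have hpow : (r / 2) ^ (ν + 2 * ((k + 1 : ℕ) : ℝ)) =
      (r / 2) ^ (ν + 2 * (k : ℝ)) * (r / 2) ^ 2 := by
    rw [← rpow_add_natCast (by positivity)]; push_cast; ring_nf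
  have hΓ : Gamma (ν + (k + 1 : ℕ) + 1) = (ν + k + 1) * Gamma (ν + k + 1) := by
    rw [← Gamma_add_one hk]; push_cast; ring_nf
  simp only [besselJTerm, hpow, hΓ, Nat.factorial_succ]
  push_cast
  field_simp
  ring

lemma abs_besselJTerm_succ_le {ν r c : ℝ} (hr : 0 < r) {k : ℕ} (hk : 0 < ν + k + 1)
    (hc : (r / 2) ^ 2 ≤ c * ((k + 1) * (ν + k + 1))) :
    |besselJTerm ν r (k + 1)| ≤ c * |besselJTerm ν r k| := by
  rw [besselJTerm_succ hr hk.ne', abs_mul, abs_neg, abs_of_nonneg (by positivity)]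
  gcongr
  rwa [div_le_iff₀ (by positivity)]

lemma summable_besselJTerm (ν : ℝ) {r : ℝ} (hr : 0 < r) : Summable (besselJTerm ν r) := by
  refine summable_of_ratio_norm_eventually_le (r := 1 / 2) (by norm_num) ?_
  filter_upwards [tendsto_natCast_atTop_atTop.eventually_ge_atTop (-ν),
    tendsto_natCast_atTop_atTop.eventually_ge_atTop (2 * (r / 2) ^ 2)] with k h1 h2
  refine abs_besselJTerm_succ_le hr (by linarith) ?_
  nlinarith

lemma besselJTerm_sub_one_add_besselJTerm_add_one (ν : ℝ) {r : ℝ} (hr : 0 < r) (k : ℕ) :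
    besselJTerm (ν - 1) r (k + 1) + besselJTerm (ν + 1) r k =
      2 * ν / r * besselJTerm ν r (k + 1) := by
  have hb : (0 : ℝ) < r / 2 := by positivity
  set y := (r / 2) ^ (ν - 1 + 2 * (k : ℝ))
  have hpow : ∀ a : ℝ, ∀ n : ℕ, a = ν - 1 + 2 * k + n → (r / 2) ^ a = y * (r / 2) ^ n := by
    rintro a n rfl; exact rpow_add_natCast hb.ne' _ _
  have hΓ : (Gamma (ν - 1 + (k + 1 : ℕ) + 1))⁻¹ =
      (ν + k + 1) * (Gamma (ν + 1 + k + 1))⁻¹ := by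
    rw [inv_Gamma_eq_self_mul_inv_Gamma_add_one]; push_cast; ring_nf
  simp only [besselJTerm]
  rw [hpow _ 2 (by push_cast; ring), hpow _ 2 (by push_cast; ring),
    hpow _ 3 (by push_cast; ring)]
  simp only [div_eq_mul_inv, mul_inv, hΓ, Nat.factorial_succ]
  rw [show ν + ((k + 1 : ℕ) : ℝ) + 1 = ν + 1 + k + 1 by push_cast; ring]
  push_cast
  field_simp
  ring

lemma besselJTerm_sub_one_zero (ν : ℝ) {r : ℝ} (hr : 0 < r) :
    besselJTerm (ν - 1) r 0 = 2 * ν / r * besselJTerm ν r 0 := by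
  rw [besselJTerm_zero, besselJTerm_zero, sub_add_cancel, div_eq_mul_inv _ (Gamma ν),
    inv_Gamma_eq_self_mul_inv_Gamma_add_one, rpow_sub_one (by positivity : r / 2 ≠ 0)]
  field_simp

theorem besselJ_sub_one_add_besselJ_add_one (ν : ℝ) {r : ℝ} (hr : 0 < r) :
    besselJ (ν - 1) r + besselJ (ν + 1) r = 2 * ν / r * besselJ ν r := by
  have hs := fun μ => summable_besselJTerm μ hr
  rw [besselJ_eq_tsum, besselJ_eq_tsum, besselJ_eq_tsum, (hs _).tsum_eq_zero_add,
    (hs ν).tsum_eq_zero_add, add_assoc, ← ((summable_nat_add_iff 1).mpr (hs _)).tsum_add (hs _),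
    besselJTerm_sub_one_zero ν hr, mul_add, ← tsum_mul_left]
  simp only [besselJTerm_sub_one_add_besselJTerm_add_one ν hr]

lemma abs_besselJ_sub_besselJTerm_zero_le {ν r : ℝ} (hr : 0 < r) (hν : r ^ 2 ≤ ν + 1) :
    |besselJ ν r - besselJTerm ν r 0| ≤ besselJTerm ν r 0 / 3 := by
  have hT : 0 ≤ besselJTerm ν r 0 := by
    rw [besselJTerm_zero]
    have := Gamma_pos_of_pos (show 0 < ν + 1 by nlinarith)
    positivity
  set T := besselJTerm ν r 0
  have hgeom : ∀ k, |besselJTerm ν r k| ≤ T * (1 / 4) ^ k := by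
    intro k
    induction k with
    | zero => simpa using abs_of_nonneg hT |>.le
    | succ k ih =>
      have hk : (0 : ℝ) ≤ k := k.cast_nonneg
      calc |besselJTerm ν r (k + 1)| ≤ 1 / 4 * |besselJTerm ν r k| :=
            abs_besselJTerm_succ_le hr (by nlinarith) (by nlinarith)
        _ ≤ T * (1 / 4) ^ (k + 1) := by rw [pow_succ]; linarith
  have hsum : HasSum (fun k : ℕ => T / 4 * (1 / 4) ^ k) (T / 3) := by
    have h := (hasSum_geometric_of_lt_one (r := 1 / 4) (by norm_num) (by norm_num)).mul_left
      (T / 4)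
    rwa [show T / 4 * (1 - 1 / 4 : ℝ)⁻¹ = T / 3 by norm_num; ring] at h
  rw [besselJ_eq_tsum, (summable_besselJTerm ν hr).tsum_eq_zero_add, add_sub_cancel_left,
    ← Real.norm_eq_abs]
  refine tsum_of_norm_bounded hsum fun k => ?_
  rw [Real.norm_eq_abs]
  refine (hgeom (k + 1)).trans_eq ?_
  ring

lemma tendsto_pow_div_Gamma_add_nat (a y : ℝ) :
    Tendsto (fun n : ℕ => y ^ n / Gamma (a + n)) atTop (𝓝 0) := by
  refine Summable.tendsto_atTop_zero
    (summable_of_ratio_norm_eventually_le (r := 1 / 2) (by norm_num) ?_)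
  filter_upwards [tendsto_natCast_atTop_atTop.eventually_ge_atTop (1 - a),
    tendsto_natCast_atTop_atTop.eventually_ge_atTop (2 * |y| - a)] with n h1 h2
  have hΓ : Gamma (a + (n + 1 : ℕ)) = (a + n) * Gamma (a + n) := by
    rw [← Gamma_add_one (by linarith)]; push_cast; ring_nf
  rw [hΓ, pow_succ, Real.norm_eq_abs, Real.norm_eq_abs, abs_div, abs_div, abs_mul, abs_mul,
    abs_pow, abs_of_pos (by linarith : 0 < a + n)]
  calc |y| ^ n * |y| / ((a + n) * |Gamma (a + n)|)
        = |y| / (a + n) * (|y| ^ n / |Gamma (a + n)|) := by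
        rw [div_mul_div_comm, mul_comm |y|]
    _ ≤ 1 / 2 * (|y| ^ n / |Gamma (a + n)|) := by
        refine mul_le_mul_of_nonneg_right ?_ (by positivity)
        rw [div_le_iff₀ (by linarith)]
        linarith

lemma besselJTerm_zero_pos {ν r : ℝ} (hr : 0 < r) (hν : 0 < ν + 1) :
    0 < besselJTerm ν r 0 := by
  rw [besselJTerm_zero]
  have := Gamma_pos_of_pos hν
  positivity

lemma eventually_sq_le_add_nat (s r : ℝ) : ∀ᶠ n : ℕ in atTop, r ^ 2 ≤ s + n + 1 :=
  (tendsto_natCast_atTop_atTop.eventually_ge_atTop (r ^ 2 - s - 1)).mono fun n hn => by linarith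

lemma eventually_besselJ_add_nat_pos (s : ℝ) {r : ℝ} (hr : 0 < r) :
    ∀ᶠ n : ℕ in atTop, 0 < besselJ (s + n) r := by
  filter_upwards [eventually_sq_le_add_nat s r] with n hn
  have hT := besselJTerm_zero_pos hr (show 0 < s + n + 1 by nlinarith)
  linarith [(abs_le.mp (abs_besselJ_sub_besselJTerm_zero_le hr hn)).1]

lemma tendsto_pow_mul_besselJ_add_nat (s x : ℝ) {r : ℝ} (hr : 0 < r) :
    Tendsto (fun n : ℕ => x ^ n * besselJ (s + n) r) atTop (𝓝 0) := by
  have hlim := (tendsto_pow_div_Gamma_add_nat (s + 1) (|x| * (r / 2))).const_mul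
    (4 / 3 * (r / 2) ^ s)
  rw [mul_zero] at hlim
  refine squeeze_zero_norm' ?_ hlim
  filter_upwards [eventually_sq_le_add_nat s r] with n hn
  have hT := besselJTerm_zero_pos hr (show 0 < s + n + 1 by nlinarith)
  have hJ : |besselJ (s + n) r| ≤ 4 / 3 * besselJTerm (s + n) r 0 := by
    linarith [abs_sub_abs_le_abs_sub (besselJ (s + n) r) (besselJTerm (s + n) r 0),
      abs_of_pos hT, abs_besselJ_sub_besselJTerm_zero_le hr hn]
  calc ‖x ^ n * besselJ (s + n) r‖ = |x| ^ n * |besselJ (s + n) r| := by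
        rw [norm_mul, norm_pow, Real.norm_eq_abs, Real.norm_eq_abs]
    _ ≤ |x| ^ n * (4 / 3 * besselJTerm (s + n) r 0) := by gcongr
    _ = 4 / 3 * (r / 2) ^ s * ((|x| * (r / 2)) ^ n / Gamma (s + 1 + n)) := by
        rw [besselJTerm_zero, rpow_add_natCast (by positivity), mul_pow,
          show s + n + 1 = s + 1 + n by ring]
        ring

section Recurrence

variable {R : Type*} [CommRing R] {S : Subring R} {a b c : ℕ → R} {D E : R}

lemma mul_pow_mul_mem_of_recurrence (hrec : ∀ n, a (n + 2) = b n * a (n + 1) + c n * a n)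
    (hb : ∀ n, D * b n ∈ S) (hc : ∀ n, D ^ 2 * c n ∈ S) (h0 : E * a 0 ∈ S)
    (h1 : E * D * a 1 ∈ S) (n : ℕ) : E * D ^ n * a n ∈ S := by
  induction n using Nat.twoStepInduction with
  | zero => simpa using h0
  | one => simpa using h1
  | more n ih0 ih1 =>
    have h : E * D ^ (n + 2) * a (n + 2) =
        D * b n * (E * D ^ (n + 1) * a (n + 1)) + D ^ 2 * c n * (E * D ^ n * a n) := by
      rw [hrec]; ring
    rw [h]
    exact S.add_mem (S.mul_mem (hb n) ih1) (S.mul_mem (hc n) ih0)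

end Recurrence

def besselSeq (s q a₀ a₁ : ℚ) : ℕ → ℚ
  | 0 => a₀
  | 1 => a₁
  | n + 2 => 2 * (s + n + 1) * besselSeq s q a₀ a₁ (n + 1) - q * besselSeq s q a₀ a₁ n

lemma exists_nat_mul_pow_mul_besselSeq_mem_bot (s q a₀ a₁ : ℚ) :
    ∃ D E : ℕ, 0 < D ∧ 0 < E ∧
      ∀ n, (E * D ^ n * besselSeq s q a₀ a₁ n : ℚ) ∈ (⊥ : Subring ℚ) := by
  have hden (x : ℚ) : (x.den * x : ℚ) ∈ (⊥ : Subring ℚ) := by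
    rw [Rat.den_mul_eq_num]; exact intCast_mem _ _
  have hnat (m : ℕ) : (m : ℚ) ∈ (⊥ : Subring ℚ) := natCast_mem _ m
  refine ⟨(2 * s).den * q.den, a₀.den * a₁.den, by positivity, by positivity, fun n => ?_⟩
  push_cast
  refine mul_pow_mul_mem_of_recurrence (b := fun n => 2 * (s + n + 1)) (c := fun _ => -q)
    (fun n => by simp only [besselSeq]; ring) (fun n => ?_) (fun _ => ?_) ?_ ?_ n
  · rw [show ((2 * s).den * q.den * (2 * (s + n + 1)) : ℚ) =
        q.den * ((2 * s).den * (2 * s)) + (((2 * s).den * q.den * 2 * (n + 1) : ℕ) : ℚ) by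
      push_cast; ring]
    exact add_mem (mul_mem (hnat _) (hden _)) (hnat _)
  · rw [show (((2 * s).den * q.den) ^ 2 * -q : ℚ) =
        -(((2 * s).den * q.den * (2 * s).den : ℕ) * (q.den * q)) by push_cast; ring]
    exact neg_mem (mul_mem (hnat _) (hden _))
  · rw [show (a₀.den * a₁.den * besselSeq s q a₀ a₁ 0 : ℚ) = a₁.den * (a₀.den * a₀) by
      simp only [besselSeq]; ring]
    exact mul_mem (hnat _) (hden _)
  · rw [show (a₀.den * a₁.den * ((2 * s).den * q.den) * besselSeq s q a₀ a₁ 1 : ℚ) =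
        ((a₀.den * (2 * s).den * q.den : ℕ) : ℚ) * (a₁.den * a₁) by
      simp only [besselSeq]; push_cast; ring]
    exact mul_mem (hnat _) (hden _)

lemma besselSeq_mul_eq {s : ℚ} {r : ℝ} (hr : 0 < r) {q : ℚ} (hq : r ^ 2 = q) {a₀ a₁ : ℚ}
    {c : ℝ} (h0 : a₀ * c = besselJ s r) (h1 : a₁ * c = r * besselJ (s + 1) r) (n : ℕ) :
    besselSeq s q a₀ a₁ n * c = r ^ n * besselJ (s + n) r := by
  induction n using Nat.twoStepInduction with
  | zero => simpa [besselSeq] using h0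
  | one => simpa [besselSeq] using h1
  | more n ih0 ih1 =>
    have hrec := besselJ_sub_one_add_besselJ_add_one (s + n + 1 : ℝ) hr
    rw [show (s : ℝ) + n + 1 - 1 = s + n by ring] at hrec
    have hrec' : r * (besselJ (s + n) r + besselJ (s + n + 1 + 1) r) =
        2 * (s + n + 1) * besselJ (s + n + 1) r := by
      rw [hrec]; field_simp
    simp only [besselSeq]
    push_cast at ih1 ⊢
    rw [← add_assoc] at ih1
    rw [show (s : ℝ) + (n + 2) = s + n + 1 + 1 by ring]
    linear_combination (2 * (s + n + 1 : ℝ)) * ih1 - (q : ℝ) * ih0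
      + r ^ n * besselJ (s + n) r * hq - r ^ (n + 1) * hrec'

lemma eq_zero_of_rat_mul_eq_besselJ {s : ℚ} {r : ℝ} (hr : 0 < r) {q : ℚ} (hq : r ^ 2 = q)
    {a₀ a₁ : ℚ} {c : ℝ} (h0 : a₀ * c = besselJ s r) (h1 : a₁ * c = r * besselJ (s + 1) r) :
    c = 0 := by
  obtain ⟨D, E, hD, hE, hint⟩ := exists_nat_mul_pow_mul_besselSeq_mem_bot s q a₀ a₁
  have hbound : ∀ᶠ n : ℕ in atTop, |c| ≤ E * ((D * r) ^ n * besselJ (s + n) r) := by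
    filter_upwards [eventually_besselJ_add_nat_pos s hr] with n hJ
    obtain ⟨m, hm⟩ := Subring.mem_bot.mp (hint n)
    have hmc : (m : ℝ) * c = E * ((D * r) ^ n * besselJ (s + n) r) := by
      rw [← Rat.cast_intCast, hm]
      push_cast
      rw [mul_assoc, besselSeq_mul_eq hr hq h0 h1 n]
      ring
    have hpos : 0 < (m : ℝ) * c := hmc ▸ by positivity
    have hm1 : (1 : ℝ) ≤ |(m : ℝ)| := by
      exact_mod_cast Int.one_le_abs (by rintro rfl; simp at hpos)
    calc |c| ≤ |(m : ℝ)| * |c| := le_mul_of_one_le_left (abs_nonneg c) hm1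
      _ = E * ((D * r) ^ n * besselJ (s + n) r) := by rw [← abs_mul, abs_of_pos hpos, hmc]
  have hlim := (tendsto_pow_mul_besselJ_add_nat s (D * r) hr).const_mul (E : ℝ)
  rw [mul_zero] at hlim
  exact abs_nonpos_iff.mp (ge_of_tendsto hlim hbound)

theorem besselJ_ratio_irrational' (s : ℚ) (r : ℝ) (hr : 0 < r)
    (hq : ∃ q : ℚ, r ^ 2 = (q : ℝ)) :
    Irrational (r * besselJ ((s : ℝ) + 1) r / besselJ (s : ℝ) r) := by
  obtain ⟨q, hq⟩ := hq
  rintro ⟨t, ht⟩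
  by_cases hJ : besselJ s r = 0
  · by_cases hJ₁ : besselJ (s + 1) r = 0
    · exact one_ne_zero (eq_zero_of_rat_mul_eq_besselJ (s := s) (a₀ := 0) (a₁ := 0) hr hq
        (by simp [hJ]) (by simp [hJ₁]))
    · exact mul_ne_zero hr.ne' hJ₁
        (eq_zero_of_rat_mul_eq_besselJ (s := s) (a₀ := 0) (a₁ := 1) hr hq (by simp [hJ]) (by simp))
  · exact hJ (eq_zero_of_rat_mul_eq_besselJ (s := s) (a₀ := 1) (a₁ := t) hr hq (by simp)
      (by rw [ht, div_mul_cancel₀ _ hJ]))
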